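/- arXiv:1904.03251 — 2 statements merged into one kernel-verified Lean document; each statement's English description precedes it below -/
import Mathlib

section
/- For positive integers m ≤ t and 0 ≤ δ < n, when m = t the sum ∑_{i=0}^{m-1} C(m-i+δ, δ) · C(i+n-δ-1, n-δ-1) equals C(m+n, n) − C(m+n-δ-1, n-δ-1). -/
/-!
Since `∑ₖ C(a + k, a) Xᵏ = (1 - X)^{-(a+1)}`, comparing coefficients in
`(1 - X)^{-(δ+1)} (1 - X)^{-(n-δ)} = (1 - X)^{-(n+1)}` gives
`∑_{i=0}^{m} C(m - i + δ, δ) C(i + n - δ - 1, n - δ - 1) = C(m + n, n)`;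
the term `i = m` of this sum is `C(m + n - δ - 1, n - δ - 1)`.
-/

open Finset PowerSeries

theorem Nat.sum_antidiagonal_add_choose_mul_add_choose (a b M : ℕ) :
    ∑ ij ∈ antidiagonal M, (a + ij.1).choose a * (b + ij.2).choose b
      = (a + b + 1 + M).choose (a + b + 1) := by
  have h := congrArg (fun f : ℤ⟦X⟧ => coeff M f)
    (congrArg Units.val (invOneSubPow_add ℤ (a + 1) (b + 1)))
  simp only [Units.val_mul, show a + 1 + (b + 1) = a + b + 1 + 1 by ring,
    invOneSubPow_val_succ_eq_mk_add_choose, coeff_mul, coeff_mk] at h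
  exact_mod_cast h.symm

theorem Nat.sum_range_choose_mul_choose_eq_choose (a b M : ℕ) :
    ∑ i ∈ range (M + 1), (M - i + a).choose a * (i + b).choose b
      = (M + a + b + 1).choose (a + b + 1) := by
  rw [show M + a + b + 1 = b + a + 1 + M by ring, show a + b + 1 = b + a + 1 by ring,
    ← Nat.sum_antidiagonal_add_choose_mul_add_choose,
    Finset.Nat.sum_antidiagonal_eq_sum_range_succ (fun i j => (b + i).choose b * (a + j).choose a)]
  exact sum_congr rfl fun i _ => by rw [Nat.mul_comm, Nat.add_comm a, Nat.add_comm b]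

theorem stmt3_general (n m δ : ℕ) (hδ : δ < n) :
    (∑ i ∈ Finset.range m,
        (Nat.choose (m - i + δ) δ * Nat.choose (i + n - δ - 1) (n - δ - 1) : ℤ))
      = Nat.choose (m + n) n - Nat.choose (m + n - δ - 1) (n - δ - 1) := by
  obtain ⟨e, rfl⟩ : ∃ e, n = δ + e + 1 := ⟨n - δ - 1, by omega⟩
  have hfull := Nat.sum_range_choose_mul_choose_eq_choose δ e m
  rw [sum_range_succ, Nat.sub_self, Nat.zero_add, Nat.choose_self, Nat.one_mul,
    show m + δ + e + 1 = m + (δ + e + 1) by ring] at hfull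
  have hidx : ∀ k, k + (δ + e + 1) - δ - 1 = k + e := fun k => by omega
  simp only [hidx, show δ + e + 1 - δ - 1 = e by omega]
  rw [eq_sub_iff_add_eq]
  exact_mod_cast hfull

theorem stmt3 (n m δ : ℕ) (hm : 1 ≤ m) (hδ : δ < n) :
    (∑ i ∈ Finset.range m,
        (Nat.choose (m - i + δ) δ * Nat.choose (i + n - δ - 1) (n - δ - 1) : ℤ))
      = Nat.choose (m + n) n - Nat.choose (m + n - δ - 1) (n - δ - 1) :=
  stmt3_general n m δ hδ
end

section
/- Let L be a line in P^3 over an algebraically closed field, let p_1, ..., p_s be distinct points on L, and let F be a nonzero homogeneous polynomial of degree t in 4 variables vanishing to order at least m at each p_i. If s ≥ t − m + 2, then F vanishes to order at least m along L. -/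
/-- The homogeneous ideal of a point of `ℙ^3` with affine representative `p`:
generated by the linear forms vanishing at `p`. -/
noncomputable def pointIdealP3 (K : Type*) [Field K] (p : Fin 4 → K) : Ideal (MvPolynomial (Fin 4) K) :=
  Ideal.span {l | l.IsHomogeneous 1 ∧ MvPolynomial.eval p l = 0}

/-- The homogeneous ideal of the line of `ℙ^3` spanned by two (linearly independent)
points `q` and `r`: generated by the linear forms vanishing at both `q` and `r`. -/
noncomputable def lineIdealP3 (K : Type*) [Field K] (q r : Fin 4 → K) : Ideal (MvPolynomial (Fin 4) K) :=
  Ideal.span {l | l.IsHomogeneous 1 ∧ MvPolynomial.eval q l = 0 ∧ MvPolynomial.eval r l = 0}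

/-!
In coordinates `x₀, x₁` along `L` and `y` transversal to it, expand `F = ∑_d y^d F_d(x)`;
as `F` is homogeneous, `F_d` is a binary form of degree `t - |d|`. Vanishing to order `m` at
the point `(a_i : b_i)` of `L` forces `ℓ_i ^ (m - |d|) ∣ F_d` for `ℓ_i = b_i x₀ - a_i x₁`.
For `|d| < m` the `s` pairwise coprime forms `ℓ_i ^ (m - |d|)` have product of degree
`s (m - |d|) > t - |d|`, so `F_d = 0`, i.e. `F ∈ (y) ^ m`.
-/

open MvPolynomial Matrix Set

lemma Nat.sub_lt_mul_sub {t m k c : ℕ} (hk : k < m) (hc : t - m + 2 ≤ c) :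
    t - k < c * (m - k) := by
  obtain ⟨j, rfl⟩ : ∃ j, m = k + j + 1 := ⟨m - k - 1, by omega⟩
  have : j ≤ c * j := Nat.le_mul_of_pos_left j (by omega)
  rw [show k + j + 1 - k = j + 1 by omega, mul_add_one]
  omega

universe u

theorem Module.Basis.exists_sum_extend {K ι : Type*} {V : Type u} [Field K] [AddCommGroup V]
    [Module K V] [FiniteDimensional K V] {v : ι → V} (hv : LinearIndependent K v) :
    ∃ (σ : Type u) (_ : Fintype σ) (b : Module.Basis (σ ⊕ ι) K V),
      ∀ i, b (Sum.inr i) = v i := by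
  let b := (Module.Basis.sumExtend hv).reindex (Equiv.sumComm _ _)
  have : Finite (_ ⊕ ι) := Module.Finite.finite_basis b
  have := Finite.sum_left (α := Module.Basis.sumExtendIndex hv) ι
  refine ⟨_, Fintype.ofFinite _, b, fun i => ?_⟩
  simp only [b, Module.Basis.sumExtend, Trans.trans, Module.Basis.coe_reindex,
    Module.Basis.coe_extend, Equiv.sumComm_symm, Equiv.sumComm_apply, Function.comp_apply,
    Sum.swap_inr]
  rfl

namespace MvPolynomial

section LinearSubst

variable {K : Type*} [Field K] {ρ σ τ : Type*}

noncomputable def linearSubst [Fintype τ] (A : Matrix σ τ K) :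
    MvPolynomial σ K →ₐ[K] MvPolynomial τ K :=
  bind₁ fun i => ∑ j, C (A i j) * X j

lemma eval_linearSubst [Fintype τ] (A : Matrix σ τ K) (p : τ → K) (f : MvPolynomial σ K) :
    eval p (linearSubst A f) = eval (A *ᵥ p) f := by
  rw [linearSubst, eval, eval₂Hom_bind₁, eval]
  congr 2 with i
  simp [mulVec, dotProduct]

lemma linearSubst_linearSubst [Fintype σ] [Fintype τ] (B : Matrix ρ σ K) (A : Matrix σ τ K)
    (f : MvPolynomial ρ K) : linearSubst A (linearSubst B f) = linearSubst (B * A) f := by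
  rw [linearSubst, linearSubst, bind₁_bind₁, linearSubst]
  refine congrArg (bind₁ · f) (_root_.funext fun i => ?_)
  simp only [map_sum, map_mul, bind₁_C_right, bind₁_X_right, Finset.mul_sum, mul_apply,
    Finset.sum_mul, mul_assoc]
  exact Finset.sum_comm

lemma linearSubst_one [Fintype σ] [DecidableEq σ] (f : MvPolynomial σ K) :
    linearSubst (1 : Matrix σ σ K) f = f := by
  simp [linearSubst, one_apply, apply_ite C]

lemma IsHomogeneous.linearSubst [Fintype τ] {f : MvPolynomial σ K} {n : ℕ}
    (hf : f.IsHomogeneous n) (A : Matrix σ τ K) : (linearSubst A f).IsHomogeneous n := by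
  simpa [MvPolynomial.linearSubst, ← aeval_eq_bind₁] using hf.aeval _ fun i =>
    IsHomogeneous.sum _ _ _ fun j _ => isHomogeneous_C_mul_X (A i j) j

end LinearSubst

section CoeffDvd

variable {R σ : Type*} [CommRing R]

def coeffDvdIdeal (ℓ : R) (m : ℕ) : Ideal (MvPolynomial σ R) where
  carrier := {f | ∀ d, ℓ ^ (m - d.degree) ∣ coeff d f}
  zero_mem' d := by simp
  add_mem' hf hg d := by
    rw [coeff_add]
    exact dvd_add (hf d) (hg d)
  smul_mem' g f hf d := by
    classical
    rw [smul_eq_mul, coeff_mul]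
    refine Finset.dvd_sum fun uv huv => Dvd.dvd.mul_left ((pow_dvd_pow ℓ ?_).trans (hf uv.2)) _
    rw [← Finset.HasAntidiagonal.mem_antidiagonal.mp huv, map_add]
    omega

lemma C_mul_mem_coeffDvdIdeal {ℓ : R} {m : ℕ} {f : MvPolynomial σ R}
    (hf : f ∈ coeffDvdIdeal ℓ m) : C ℓ * f ∈ coeffDvdIdeal ℓ (m + 1) := fun d => by
  rw [coeff_C_mul]
  exact (pow_dvd_pow ℓ (by omega)).trans (pow_succ' ℓ _ ▸ mul_dvd_mul_left ℓ (hf d))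

lemma X_mul_mem_coeffDvdIdeal {ℓ : R} {m : ℕ} {f : MvPolynomial σ R}
    (hf : f ∈ coeffDvdIdeal ℓ m) (i : σ) : X i * f ∈ coeffDvdIdeal ℓ (m + 1) := fun d => by
  classical
  rw [coeff_X_mul']
  split_ifs with hi
  · refine (pow_dvd_pow ℓ ?_).trans (hf _)
    have hle : Finsupp.single i 1 ≤ d :=
      Finsupp.single_le_iff.mpr (Nat.one_le_iff_ne_zero.mpr (Finsupp.mem_support_iff.mp hi))
    have := map_add Finsupp.degree (d - Finsupp.single i 1) (Finsupp.single i 1)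
    rw [tsub_add_cancel_of_le hle, Finsupp.degree_single] at this
    omega
  · exact dvd_zero _

lemma span_C_insert_range_X_pow_le (ℓ : R) (m : ℕ) :
    Ideal.span (insert (C ℓ) (range X)) ^ m ≤ coeffDvdIdeal (σ := σ) ℓ m := by
  induction m with
  | zero => exact fun f _ d => by simp
  | succ m ih =>
    rw [pow_succ', ← (Ideal.span (insert (C ℓ) (range X)) ^ m).span_eq, Submodule.span_mul_span,
      Ideal.span_le]
    refine Set.mul_subset_iff.mpr fun g hg f hf => ?_
    rcases hg with rfl | ⟨i, rfl⟩
    · exact C_mul_mem_coeffDvdIdeal (ih hf)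
    · exact X_mul_mem_coeffDvdIdeal (ih hf) i

end CoeffDvd

variable {K : Type*} [Field K]

theorem mem_pow_idealOfVars_of_forall_mem_span_pow {σ τ ι : Type*} [Fintype ι]
    {ℓ : ι → MvPolynomial τ K} (hℓ : ∀ i, (ℓ i).IsHomogeneous 1) (hℓ0 : ∀ i, ℓ i ≠ 0)
    (hℓℓ : Pairwise fun i j => IsRelPrime (ℓ i) (ℓ j)) {t m : ℕ}
    (hcard : t - m + 2 ≤ Fintype.card ι)
    {f : MvPolynomial σ (MvPolynomial τ K)} (hf : ∀ d, (coeff d f).IsHomogeneous (t - d.degree))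
    (hvan : ∀ i, f ∈ Ideal.span (insert (C (ℓ i)) (range X)) ^ m) :
    f ∈ idealOfVars σ _ ^ m := by
  rw [mem_pow_idealOfVars_iff']
  intro d hd
  set n := m - d.degree
  have hdvd : (∏ i, ℓ i ^ n) ∣ coeff d f :=
    Fintype.prod_dvd_of_isRelPrime (fun i j hij => (hℓℓ hij).pow)
      fun i => span_C_insert_range_X_pow_le (ℓ i) m (hvan i) d
  have hdeg : (∏ i, ℓ i ^ n).totalDegree = Fintype.card ι * n := by
    refine (IsHomogeneous.prod _ _ (fun _ => n) fun i _ => ?_).totalDegree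
      (Finset.prod_ne_zero_iff.mpr fun i _ => pow_ne_zero n (hℓ0 i)) |>.trans (by simp)
    simpa using (hℓ i).pow n
  by_contra hne
  have := (totalDegree_le_of_dvd_of_isDomain hdvd hne).trans (hf d).totalDegree_le
  exact (Nat.sub_lt_mul_sub hd hcard).not_ge (hdeg ▸ this)

lemma coeff_coeff_sumAlgEquiv {σ τ : Type*} (F : MvPolynomial (σ ⊕ τ) K) (d : σ →₀ ℕ)
    (e : τ →₀ ℕ) : coeff e (coeff d (sumAlgEquiv K σ τ F)) = coeff (d.sumElim e) F := by
  simp [sumAlgEquiv, coeff, AddMonoidAlgebra.curryAlgEquiv, AddMonoidAlgebra.curryRingEquiv,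
    AddMonoidAlgebra.curryAddEquiv]

-- For `t < d.degree` the coefficient vanishes, so the truncated `t - d.degree` is harmless.
lemma IsHomogeneous.coeff_sumAlgEquiv {σ τ : Type*} {F : MvPolynomial (σ ⊕ τ) K} {t : ℕ}
    (hF : F.IsHomogeneous t) (d : σ →₀ ℕ) :
    (coeff d (sumAlgEquiv K σ τ F)).IsHomogeneous (t - d.degree) := fun e he => by
  rw [coeff_coeff_sumAlgEquiv] at he
  have := hF he
  rw [Pi.one_def, ← Finsupp.degree_eq_weight_one, Finsupp.sumElim_eq_add, map_add,
    Finsupp.degree_mapDomain, Finsupp.degree_mapDomain] at this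
  rw [Pi.one_def, ← Finsupp.degree_eq_weight_one]
  omega

theorem mem_span_X_inl_pow_of_forall_mem_span_pow {σ τ ι : Type*} [Fintype ι]
    {ℓ : ι → MvPolynomial τ K} (hℓ : ∀ i, (ℓ i).IsHomogeneous 1) (hℓ0 : ∀ i, ℓ i ≠ 0)
    (hℓℓ : Pairwise fun i j => IsRelPrime (ℓ i) (ℓ j)) {t m : ℕ}
    (hcard : t - m + 2 ≤ Fintype.card ι)
    {F : MvPolynomial (σ ⊕ τ) K} (hF : F.IsHomogeneous t)
    (hvan : ∀ i, F ∈ Ideal.span (insert (rename Sum.inr (ℓ i)) (range (X ∘ Sum.inl))) ^ m) :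
    F ∈ Ideal.span (range (X ∘ Sum.inl)) ^ m := by
  set E := sumAlgEquiv K σ τ
  have hE : E '' range (X ∘ Sum.inl) = range X := by
    rw [← range_comp]
    exact congrArg range (_root_.funext (sumAlgEquiv_X_inl K σ τ))
  have hEℓ : ∀ i, E (rename Sum.inr (ℓ i)) = C (ℓ i) := fun i =>
    congrArg (· (ℓ i)) (sumAlgEquiv_comp_rename_inr K σ τ)
  have hEF : E F ∈ idealOfVars σ _ ^ m := by
    refine mem_pow_idealOfVars_of_forall_mem_span_pow hℓ hℓ0 hℓℓ hcard hF.coeff_sumAlgEquiv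
      fun i => ?_
    simpa [Ideal.map_pow, Ideal.map_span, image_insert_eq, hE, hEℓ] using
      Ideal.mem_map_of_mem E (hvan i)
  simpa [Ideal.map_pow, Ideal.map_span, ← hE, image_image] using
    Ideal.mem_map_of_mem E.symm hEF

lemma IsHomogeneous.exists_sum_smul_X {σ : Type*} [Fintype σ] {l : MvPolynomial σ K}
    (hl : l.IsHomogeneous 1) : ∃ c : σ → K, ∑ i, c i • X i = l := by
  rw [← Submodule.mem_span_range_iff_exists_fun, ← homogeneousSubmodule_one_eq_span_X]
  exact hl

lemma irreducible_of_isHomogeneous_one {σ : Type*} {l : MvPolynomial σ K}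
    (hl : l.IsHomogeneous 1) (hl0 : l ≠ 0) : Irreducible l := by
  refine irreducible_of_totalDegree_eq_one (hl.totalDegree hl0) fun x hx => ?_
  obtain ⟨d, hd⟩ := exists_coeff_ne_zero hl0
  exact isUnit_iff_ne_zero.mpr (ne_zero_of_dvd_ne_zero hd (hx d))

end MvPolynomial

section VanishingForm

variable {K : Type*} [Field K]

noncomputable def vanishingForm (a b : K) : MvPolynomial (Fin 2) K := C b * X 0 - C a * X 1

lemma isHomogeneous_vanishingForm (a b : K) : (vanishingForm a b).IsHomogeneous 1 :=
  (isHomogeneous_C_mul_X _ _).sub (isHomogeneous_C_mul_X _ _)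

lemma eval_vanishingForm (a b : K) (p : Fin 2 → K) :
    eval p (vanishingForm a b) = b * p 0 - a * p 1 := by
  simp [vanishingForm]

lemma vanishingForm_ne_zero {a b : K} (hab : (a, b) ≠ (0, 0)) : vanishingForm a b ≠ 0 := by
  intro h
  have hb := congrArg (eval ![1, 0]) h
  have ha := congrArg (eval ![0, 1]) h
  simp only [eval_vanishingForm, map_zero] at ha hb
  exact hab (by simp_all)

lemma isRelPrime_vanishingForm {a b c d : K} (h : a * d ≠ c * b) :
    IsRelPrime (vanishingForm a b) (vanishingForm c d) := by
  have hab : (a, b) ≠ (0, 0) := by rintro ⟨⟩; simp at h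
  rw [(irreducible_of_isHomogeneous_one (isHomogeneous_vanishingForm a b)
    (vanishingForm_ne_zero hab)).isRelPrime_iff_not_dvd]
  rintro ⟨g, hg⟩
  have := congrArg (eval ![a, b]) hg
  simp only [eval_vanishingForm, map_mul] at this
  exact h (by simpa [mul_comm, sub_eq_zero] using this)

lemma exists_eq_mul_of_mul_add_mul_eq_zero {a b α β : K} (hab : (a, b) ≠ (0, 0))
    (h : α * a + β * b = 0) : ∃ e, α = e * b ∧ β = -(e * a) := by
  rcases eq_or_ne a 0 with rfl | ha
  · have hb : b ≠ 0 := by rintro rfl; exact hab rfl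
    exact ⟨α / b, by field_simp, by simpa [hb] using h⟩
  · exact ⟨-β / a, by field_simp; linear_combination h, by field_simp⟩

end VanishingForm

section LinearVanishingIdeal

variable {K : Type*} [Field K] {σ τ : Type*}

noncomputable def linearVanishingIdeal (S : Set (σ → K)) : Ideal (MvPolynomial σ K) :=
  Ideal.span {l | l.IsHomogeneous 1 ∧ ∀ p ∈ S, eval p l = 0}

lemma pointIdealP3_eq_linearVanishingIdeal (p : Fin 4 → K) :
    pointIdealP3 K p = linearVanishingIdeal {p} := by
  simp [pointIdealP3, linearVanishingIdeal]

lemma lineIdealP3_eq_linearVanishingIdeal (q r : Fin 4 → K) :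
    lineIdealP3 K q r = linearVanishingIdeal {q, r} := by
  simp [lineIdealP3, linearVanishingIdeal]

lemma X_mem_linearVanishingIdeal {S : Set (σ → K)} {i : σ} (h : ∀ p ∈ S, p i = 0) :
    X i ∈ linearVanishingIdeal S :=
  Ideal.subset_span ⟨isHomogeneous_X K i, by simpa using h⟩

lemma map_linearSubst_linearVanishingIdeal_le [Fintype τ] (A : Matrix σ τ K) {S : Set (σ → K)}
    {T : Set (τ → K)} (h : ∀ p ∈ T, A *ᵥ p ∈ S) :
    (linearVanishingIdeal S).map (linearSubst A) ≤ linearVanishingIdeal T := by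
  rw [linearVanishingIdeal, Ideal.map_span, Ideal.span_le]
  rintro _ ⟨l, ⟨hl, hS⟩, rfl⟩
  exact Ideal.subset_span
    ⟨hl.linearSubst A, fun p hp => by rw [eval_linearSubst, hS _ (h p hp)]⟩

lemma linearVanishingIdeal_le_span_insert [Fintype σ] {a b : K} (hab : (a, b) ≠ (0, 0)) :
    linearVanishingIdeal {Sum.elim (0 : σ → K) ![a, b]} ≤
      Ideal.span (insert (rename Sum.inr (vanishingForm a b)) (range (X ∘ Sum.inl))) := by
  rw [linearVanishingIdeal, Ideal.span_le]
  rintro _ ⟨hl, hlp⟩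
  obtain ⟨c, rfl⟩ := hl.exists_sum_smul_X
  have hc : c (Sum.inr 0) * a + c (Sum.inr 1) * b = 0 := by
    simpa [Fintype.sum_sum_type] using hlp _ rfl
  obtain ⟨e, he0, he1⟩ := exists_eq_mul_of_mul_add_mul_eq_zero hab hc
  have hsplit : ∑ i, c i • X i =
      ∑ j, c (Sum.inl j) • X (Sum.inl j) + e • rename Sum.inr (vanishingForm a b) := by
    simp only [Fintype.sum_sum_type, Fin.sum_univ_two, he0, he1, vanishingForm, smul_eq_C_mul,
      map_sub, map_mul, map_neg, rename_C, rename_X]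
    ring
  rw [SetLike.mem_coe, hsplit]
  exact add_mem (Ideal.sum_mem _ fun j _ =>
      Submodule.smul_of_tower_mem _ _ (Ideal.subset_span (mem_insert_of_mem _ ⟨j, rfl⟩)))
    (Submodule.smul_of_tower_mem _ _ (Ideal.subset_span (mem_insert _ _)))

end LinearVanishingIdeal

section Coordinates

variable {K : Type*} [Field K] {κ ι σ : Type*} [Fintype κ] [Fintype ι]

lemma Module.Basis.basisFun_toMatrix_mulVec_repr (e : Module.Basis ι K (κ → K)) (x : κ → K) :
    (Pi.basisFun K κ).toMatrix e *ᵥ e.repr x = x :=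
  (e.toMatrix_mulVec_repr _ x).trans (_root_.funext (Pi.basisFun_repr K κ x))

lemma Module.Basis.toMatrix_basisFun_mulVec (e : Module.Basis ι K (κ → K)) (x : κ → K) :
    e.toMatrix (Pi.basisFun K κ) *ᵥ x = e.repr x := by
  have := (Pi.basisFun K κ).toMatrix_mulVec_repr e x
  rwa [show ⇑((Pi.basisFun K κ).repr x) = x from _root_.funext (Pi.basisFun_repr K κ x)]
    at this

lemma linearSubst_toMatrix_linearSubst_toMatrix [DecidableEq κ] (e : Module.Basis ι K (κ → K))
    (f : MvPolynomial κ K) :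
    linearSubst (e.toMatrix (Pi.basisFun K κ))
      (linearSubst ((Pi.basisFun K κ).toMatrix e) f) = f := by
  rw [linearSubst_linearSubst, Module.Basis.toMatrix_mul_toMatrix_flip, linearSubst_one]

variable [Fintype σ]

lemma map_linearSubst_linearVanishingIdeal_singleton_le
    (e : Module.Basis (σ ⊕ Fin 2) K (κ → K)) (a b : K) :
    (linearVanishingIdeal {a • e (Sum.inr 0) + b • e (Sum.inr 1)}).map
      (linearSubst ((Pi.basisFun K κ).toMatrix e)) ≤
      linearVanishingIdeal {Sum.elim (0 : σ → K) ![a, b]} := by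
  have hcoord :
      ⇑(e.repr (a • e (Sum.inr 0) + b • e (Sum.inr 1))) = Sum.elim (0 : σ → K) ![a, b] := by
    ext (j | j)
    · simp
    · fin_cases j <;> simp
  refine map_linearSubst_linearVanishingIdeal_le _ fun p hp => ?_
  rw [mem_singleton_iff.mp hp, ← hcoord, e.basisFun_toMatrix_mulVec_repr, mem_singleton_iff]

lemma map_linearSubst_span_X_inl_le (e : Module.Basis (σ ⊕ Fin 2) K (κ → K)) :
    (Ideal.span (range (X ∘ Sum.inl))).map (linearSubst (e.toMatrix (Pi.basisFun K κ))) ≤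
      linearVanishingIdeal {e (Sum.inr 0), e (Sum.inr 1)} := by
  refine le_trans (Ideal.map_mono ?_) (map_linearSubst_linearVanishingIdeal_le _
    (S := {⇑(e.repr (e (Sum.inr 0))), ⇑(e.repr (e (Sum.inr 1)))})
    (by simp [e.toMatrix_basisFun_mulVec]))
  rw [Ideal.span_le]
  rintro _ ⟨j, rfl⟩
  exact X_mem_linearVanishingIdeal (by simp)

end Coordinates

theorem stmt4_general (K : Type*) [Field K] (t m s : ℕ)
    (hs : t - m + 2 ≤ s)
    (q r : Fin 4 → K) (hqr : LinearIndependent K ![q, r])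
    -- the points `p i = a i • q + b i • r` lie on the line through `q` and `r`;
    -- they are nonzero and pairwise distinct as points of `ℙ^3`
    (a b : Fin s → K) (hab : ∀ i, (a i, b i) ≠ (0, 0))
    (hdist : ∀ i j, i ≠ j → a i * b j ≠ a j * b i)
    (F : MvPolynomial (Fin 4) K) (hF : F.IsHomogeneous t)
    (hvan : ∀ i, F ∈ (pointIdealP3 K (a i • q + b i • r)) ^ m) :
    F ∈ (lineIdealP3 K q r) ^ m := by
  obtain ⟨σ, _, e, he⟩ := Module.Basis.exists_sum_extend hqr
  obtain rfl : e (Sum.inr 0) = q := he 0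
  obtain rfl : e (Sum.inr 1) = r := he 1
  have hline : linearSubst ((Pi.basisFun K (Fin 4)).toMatrix e) F ∈
      Ideal.span (range (X ∘ Sum.inl)) ^ m := by
    refine mem_span_X_inl_pow_of_forall_mem_span_pow (ℓ := fun i => vanishingForm (a i) (b i))
      (fun i => isHomogeneous_vanishingForm _ _) (fun i => vanishingForm_ne_zero (hab i))
      (fun i j hij => isRelPrime_vanishingForm (hdist i j hij)) (by simpa using hs)
      (hF.linearSubst _) fun i => ?_
    have hpt := (map_linearSubst_linearVanishingIdeal_singleton_le e (a i) (b i)).trans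
      (linearVanishingIdeal_le_span_insert (hab i))
    refine Ideal.pow_right_mono hpt m ?_
    rw [← Ideal.map_pow, ← pointIdealP3_eq_linearVanishingIdeal]
    exact Ideal.mem_map_of_mem _ (hvan i)
  rw [← linearSubst_toMatrix_linearSubst_toMatrix e F, lineIdealP3_eq_linearVanishingIdeal]
  refine Ideal.pow_right_mono (map_linearSubst_span_X_inl_le e) m ?_
  rw [← Ideal.map_pow]
  exact Ideal.mem_map_of_mem _ hline

theorem stmt4 (K : Type*) [Field K] [IsAlgClosed K] (t m s : ℕ) (hmt : m ≤ t)
    (hs : t - m + 2 ≤ s)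
    (q r : Fin 4 → K) (hqr : LinearIndependent K ![q, r])
    -- the points `p i = a i • q + b i • r` lie on the line through `q` and `r`;
    -- they are nonzero and pairwise distinct as points of `ℙ^3`
    (a b : Fin s → K) (hab : ∀ i, (a i, b i) ≠ (0, 0))
    (hdist : ∀ i j, i ≠ j → a i * b j ≠ a j * b i)
    (F : MvPolynomial (Fin 4) K) (hF : F.IsHomogeneous t) (hF0 : F ≠ 0)
    (hvan : ∀ i, F ∈ (pointIdealP3 K (a i • q + b i • r)) ^ m) :
    F ∈ (lineIdealP3 K q r) ^ m :=
  stmt4_general K t m s hs q r hqr a b hab hdist F hF hvan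
end
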